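/- Lemma (nonsingularity of the joint covariance for rectangular kernels). Assume (A1), (A2), (A5), and that the weights satisfy w_{l,i} w_{m,i} = w_{l,i} for all l ≤ m and all i. Then D_l Σ D_mᵀ = B_{max(l,m)}⁻¹ for all l, m, so 𝚺_k is the k×k block matrix whose (l,m)-th p×p block is B_{max(l,m)}⁻¹; moreover for every k = 2, …, K, det 𝚺_k = det(B_k⁻¹) · ∏_{l=2}^{k} det(B_{l−1}⁻¹ − B_l⁻¹) > 0, and in particular 𝚺_k is nonsingular. -/

import Mathlib

/-!
With the nested weights, `W_l Σ W_m = W_l` for `l ≤ m`, so `D_l Σ D_mᵀ` collapses to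
`B_l⁻¹ (Ψ W_l Ψᵀ) B_m⁻¹ = B_m⁻¹`. A block matrix whose `(a, b)` block is `A_{max(a,b)}`
factors as `L Δ Lᵀ`, where `L` is the block upper-triangular matrix of identity blocks and
`Δ = diag(A_1 - A_2, …, A_{k-1} - A_k, A_k)`; hence its determinant is
`det A_k · ∏ det (A_{l-1} - A_l)`. Finally `B_{l-1}⁻¹ - B_l⁻¹ = B_{l-1}⁻¹ (B_l - B_{l-1}) B_l⁻¹`
and `B_l - B_{l-1} ≻ 0` by (A5) with `u0 > 1`, so every factor has positive determinant.
-/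

open MeasureTheory ProbabilityTheory Matrix Real

noncomputable section

namespace SpatialAdapt

/-- The law `N(m, diag(s i ^ 2))` on `ℝ^n`: product of independent one-dimensional Gaussians. -/
def gaussianVec (n : ℕ) (m s : Fin n → ℝ) : Measure (Fin n → ℝ) :=
  Measure.pi fun i => gaussianReal (m i) (Real.toNNReal (s i ^ 2))

/-- Löwner partial order on symmetric matrices: `A ⪯ B` iff `B - A` is positive semidefinite. -/
def LoewnerLE {ι : Type*} [Fintype ι] (A B : Matrix ι ι ℝ) : Prop :=
  (B - A).PosSemidef

/-- Diagonal covariance matrix `diag(s i ^ 2)`. -/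
def covMat (n : ℕ) (s : Fin n → ℝ) : Matrix (Fin n) (Fin n) ℝ :=
  Matrix.diagonal fun i => s i ^ 2

/-- `W = Σ^{-1/2} 𝒲 Σ^{-1/2} = diag(w i / σ i ^ 2)`. -/
def Wmat (n : ℕ) (σv : Fin n → ℝ) (w : Fin n → ℝ) : Matrix (Fin n) (Fin n) ℝ :=
  Matrix.diagonal fun i => w i / σv i ^ 2

/-- `B = Ψ W Ψᵀ`. -/
def Bmat (n p : ℕ) (σv : Fin n → ℝ) (Ψ : Matrix (Fin p) (Fin n) ℝ) (w : Fin n → ℝ) :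
    Matrix (Fin p) (Fin p) ℝ :=
  Ψ * Wmat n σv w * Ψᵀ

/-- `D = B⁻¹ Ψ W`. -/
def Dmat (n p : ℕ) (σv : Fin n → ℝ) (Ψ : Matrix (Fin p) (Fin n) ℝ) (w : Fin n → ℝ) :
    Matrix (Fin p) (Fin n) ℝ :=
  (Bmat n p σv Ψ w)⁻¹ * Ψ * Wmat n σv w

/-- The quasi-MLE `θ̃ = B⁻¹ Ψ W y`. -/
def thetaTilde (n p : ℕ) (σv : Fin n → ℝ) (Ψ : Matrix (Fin p) (Fin n) ℝ) (w : Fin n → ℝ)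
    (y : Fin n → ℝ) : Fin p → ℝ :=
  (Dmat n p σv Ψ w).mulVec y

/-- Quadratic form `v ⬝ B v`. -/
def quadForm {p : ℕ} (B : Matrix (Fin p) (Fin p) ℝ) (v : Fin p → ℝ) : ℝ :=
  v ⬝ᵥ B.mulVec v

/-- The test statistic `T_{lm} = (θ̃_l - θ̃_m)ᵀ B_l (θ̃_l - θ̃_m)`. -/
def Tstat (n p : ℕ) (σv : Fin n → ℝ) (Ψ : Matrix (Fin p) (Fin n) ℝ) (w : ℕ → Fin n → ℝ)
    (l m : ℕ) (y : Fin n → ℝ) : ℝ :=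
  quadForm (Bmat n p σv Ψ (w l))
    (thetaTilde n p σv Ψ (w l) y - thetaTilde n p σv Ψ (w m) y)

/-- The adaptive index `k̂ = max {k ≤ K : T_{lm} ≤ z_l for all 1 ≤ l < m ≤ k}`. -/
def khat (n p K : ℕ) (σv : Fin n → ℝ) (Ψ : Matrix (Fin p) (Fin n) ℝ) (w : ℕ → Fin n → ℝ)
    (z : ℕ → ℝ) (y : Fin n → ℝ) : ℕ :=
  sSup {k | k ≤ K ∧ ∀ l m, 1 ≤ l → l < m → m ≤ k → Tstat n p σv Ψ w l m y ≤ z l}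

/-- The adaptive estimator `θ̂ = θ̃_{k̂}`. -/
def thetaHat (n p K : ℕ) (σv : Fin n → ℝ) (Ψ : Matrix (Fin p) (Fin n) ℝ) (w : ℕ → Fin n → ℝ)
    (z : ℕ → ℝ) (y : Fin n → ℝ) : Fin p → ℝ :=
  thetaTilde n p σv Ψ (w (khat n p K σv Ψ w z y)) y

/-- The last accepted estimator after `k` steps: `θ̂_k = θ̃_{min(k, k̂)}`. -/
def thetaHatStep (n p K : ℕ) (σv : Fin n → ℝ) (Ψ : Matrix (Fin p) (Fin n) ℝ)
    (w : ℕ → Fin n → ℝ) (z : ℕ → ℝ) (k : ℕ) (y : Fin n → ℝ) : Fin p → ℝ :=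
  thetaTilde n p σv Ψ (w (min k (khat n p K σv Ψ w z y))) y

/-- `C(p, r) = E|χ²_p|^r = 2^r Γ(r + p/2) / Γ(p/2)`. -/
def Cpr (p : ℕ) (r : ℝ) : ℝ :=
  2 ^ r * Real.Gamma (r + p / 2) / Real.Gamma (p / 2)

/-- `P(χ²_p ≥ t)`, the tail of the chi-squared distribution with `p` degrees of freedom. -/
def chiSqTail (p : ℕ) (t : ℝ) : ℝ :=
  ((Measure.pi fun _ : Fin p => gaussianReal 0 1) {x | t ≤ ∑ i, x i ^ 2}).toReal

/-- The `pk × pk` joint covariance `𝔻_k (J_k ⊗ Σm) 𝔻_kᵀ`, whose `(l, m)` block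
is `D_l Σm D_mᵀ` (blocks are indexed by `1, …, k`, i.e. by `Fin k` shifted by one). -/
def jointCov (n p : ℕ) (σv σm : Fin n → ℝ) (Ψ : Matrix (Fin p) (Fin n) ℝ)
    (w : ℕ → Fin n → ℝ) (k : ℕ) : Matrix (Fin k × Fin p) (Fin k × Fin p) ℝ :=
  Matrix.of fun a b =>
    (Dmat n p σv Ψ (w (a.1 + 1)) * covMat n σm * (Dmat n p σv Ψ (w (b.1 + 1)))ᵀ) a.2 b.2

/-- The stacked bias vector `b(k) = (θ̄_1 - θ, …, θ̄_k - θ)`. -/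
def biasVec (n p : ℕ) (σv : Fin n → ℝ) (Ψ : Matrix (Fin p) (Fin n) ℝ) (w : ℕ → Fin n → ℝ)
    (k : ℕ) (f : Fin n → ℝ) (θ : Fin p → ℝ) : Fin k × Fin p → ℝ :=
  fun a => (thetaTilde n p σv Ψ (w (a.1 + 1)) f - θ) a.2

/-- The modeling bias `Δ(k) = b(k)ᵀ 𝚺_k⁻¹ b(k)`. -/
def DeltaK (n p : ℕ) (σv : Fin n → ℝ) (Ψ : Matrix (Fin p) (Fin n) ℝ) (w : ℕ → Fin n → ℝ)
    (k : ℕ) (f : Fin n → ℝ) (θ : Fin p → ℝ) : ℝ :=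
  biasVec n p σv Ψ w k f θ ⬝ᵥ
    (jointCov n p σv σv Ψ w k)⁻¹.mulVec (biasVec n p σv Ψ w k f θ)

/-- The componentwise `k × k` covariance `𝚺_{k,j}` with entries `(D_l Σm D_mᵀ)_{jj}`. -/
def jointCovComp (n p : ℕ) (σv σm : Fin n → ℝ) (Ψ : Matrix (Fin p) (Fin n) ℝ)
    (w : ℕ → Fin n → ℝ) (k : ℕ) (j : Fin p) : Matrix (Fin k) (Fin k) ℝ :=
  Matrix.of fun a b =>
    (Dmat n p σv Ψ (w (a.1 + 1)) * covMat n σm * (Dmat n p σv Ψ (w (b.1 + 1)))ᵀ) j j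

/-- The componentwise bias vector `b_j(k)`. -/
def biasVecComp (n p : ℕ) (σv : Fin n → ℝ) (Ψ : Matrix (Fin p) (Fin n) ℝ)
    (w : ℕ → Fin n → ℝ) (k : ℕ) (f : Fin n → ℝ) (θ : Fin p → ℝ) (j : Fin p) : Fin k → ℝ :=
  fun a => (thetaTilde n p σv Ψ (w (a.1 + 1)) f - θ) j

/-- The componentwise modeling bias `Δ_j(k) = b_j(k)ᵀ 𝚺_{k,j}⁻¹ b_j(k)`. -/
def DeltaComp (n p : ℕ) (σv : Fin n → ℝ) (Ψ : Matrix (Fin p) (Fin n) ℝ)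
    (w : ℕ → Fin n → ℝ) (k : ℕ) (f : Fin n → ℝ) (θ : Fin p → ℝ) (j : Fin p) : ℝ :=
  biasVecComp n p σv Ψ w k f θ j ⬝ᵥ
    (jointCovComp n p σv σv Ψ w k j)⁻¹.mulVec (biasVecComp n p σv Ψ w k f θ j)

open scoped Classical in
/-- `φ(δ)`: equal to `1` for homogeneous errors, `2(1+δ)/(1-δ)² - 1` otherwise. -/
def varphi (n : ℕ) (σ0 σv : Fin n → ℝ) (δ : ℝ) : ℝ :=
  if ∃ c0 c : ℝ, (∀ i, σ0 i = c0) ∧ (∀ i, σv i = c) then 1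
  else 2 * (1 + δ) / (1 - δ) ^ 2 - 1

/-- `σ̄²_max(k) = max_{1 ≤ l ≤ k} σ²_max(l)`. -/
def sbarMax (σmax : ℕ → ℝ) (k : ℕ) : ℝ :=
  sSup (σmax '' Set.Icc 1 k)

/-- Euclidean norm on `ℝ^p`. -/
def enorm {p : ℕ} (v : Fin p → ℝ) : ℝ :=
  Real.sqrt (∑ i, v i ^ 2)

end SpatialAdapt

open scoped Kronecker

theorem Fin.sum_ite_le_sub_succ {M : Type*} [AddCommGroup M] (f : ℕ → M) {m k : ℕ}
    (hm : m ≤ k) :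
    ∑ c : Fin k, (if m ≤ c then f c - f (c + 1) else 0) = f m - f k := by
  rw [Fin.sum_univ_eq_sum_range (fun c => if m ≤ c then f c - f (c + 1) else 0),
    ← Finset.sum_filter]
  have hIco : (Finset.range k).filter (m ≤ ·) = Finset.Ico m k := by ext; simp [and_comm]
  rw [hIco, ← neg_sub, ← Finset.sum_Ico_sub f hm, ← Finset.sum_neg_distrib]
  simp

namespace Matrix

section MaxBlock

variable {R : Type*} [CommRing R] {p : ℕ}

def maxBlockMatrix (A : ℕ → Matrix (Fin p) (Fin p) R) (k : ℕ) :
    Matrix (Fin k × Fin p) (Fin k × Fin p) R :=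
  of fun x y => A (max ((x.1 : ℕ) + 1) (y.1 + 1)) x.2 y.2

theorem maxBlockMatrix_eq_mul_mul_transpose {k : ℕ} (A : ℕ → Matrix (Fin p) (Fin p) R)
    (hA : A (k + 1) = 0) :
    maxBlockMatrix A k =
      (of (fun a c : Fin k => if a ≤ c then (1 : R) else 0) ⊗ₖ
          (1 : Matrix (Fin p) (Fin p) R)) *
        reindex (Equiv.prodComm _ _) (Equiv.prodComm _ _)
          (blockDiagonal fun c : Fin k => A (c + 1) - A (c + 2)) *
      (of (fun a c : Fin k => if a ≤ c then (1 : R) else 0) ⊗ₖ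
        (1 : Matrix (Fin p) (Fin p) R))ᵀ := by
  ext x y
  have htele := Fin.sum_ite_le_sub_succ (fun j => A (j + 1) x.2 y.2) (max_lt y.1.isLt x.1.isLt).le
  simp only [hA, zero_apply, sub_zero] at htele
  rw [maxBlockMatrix, of_apply, max_add_add_right, max_comm, ← htele]
  simp [mul_apply, Fintype.sum_prod_type, blockDiagonal_apply, one_apply, ite_and]

theorem det_maxBlockMatrix_of_eq_zero {k : ℕ} (A : ℕ → Matrix (Fin p) (Fin p) R)
    (hA : A (k + 1) = 0) :
    (maxBlockMatrix A k).det = ∏ c : Fin k, (A (c + 1) - A (c + 2)).det := by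
  rw [maxBlockMatrix_eq_mul_mul_transpose A hA, det_mul, det_mul, det_transpose, det_kronecker,
    det_of_isUpperTriangular, det_reindex_self, det_blockDiagonal]
  · simp
  · intro a c (h : c < a)
    simp [not_le.mpr h]

theorem det_maxBlockMatrix (A : ℕ → Matrix (Fin p) (Fin p) R) {k : ℕ} (hk : 1 ≤ k) :
    (maxBlockMatrix A k).det = (A k).det * ∏ l ∈ Finset.Icc 2 k, (A (l - 1) - A l).det := by
  obtain ⟨k, rfl⟩ : ∃ k', k = k' + 1 := ⟨k - 1, by omega⟩
  -- cutting `A` off after `k + 1` makes the last diagonal block `A (k + 1)` itself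
  set A' : ℕ → Matrix (Fin p) (Fin p) R := fun j => if j ≤ k + 1 then A j else 0
  have hAA' : maxBlockMatrix A (k + 1) = maxBlockMatrix A' (k + 1) := by
    ext x y
    simp [A', maxBlockMatrix, Nat.lt_succ_iff.mp x.1.isLt, Nat.lt_succ_iff.mp y.1.isLt]
  have hIcc : ∏ l ∈ Finset.Icc 2 (k + 1), (A (l - 1) - A l).det =
      ∏ c ∈ Finset.range k, (A (c + 1) - A (c + 2)).det := by
    rw [← Finset.Ico_add_one_right_eq_Icc, Finset.range_eq_Ico]
    exact (Finset.prod_Ico_add' (fun l => (A (l - 1) - A l).det) 0 k 2).symm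
  rw [hAA', det_maxBlockMatrix_of_eq_zero A' (by simp [A']),
    Fin.prod_univ_eq_prod_range (fun c => (A' (c + 1) - A' (c + 2)).det), Finset.prod_range_succ,
    mul_comm, hIcc]
  congr 1
  · simp [A']
  · refine Finset.prod_congr rfl fun c hc => ?_
    have hck := Finset.mem_range.mp hc
    simp [A', hck.le, Nat.succ_le_of_lt hck]

end MaxBlock

open scoped ComplexOrder in
theorem det_inv_sub_inv_pos {n 𝕜 : Type*} [Fintype n] [DecidableEq n] [RCLike 𝕜]
    {A B : Matrix n n 𝕜} (hA : A.PosDef) (hB : B.PosDef) (hBA : (B - A).PosDef) :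
    0 < (A⁻¹ - B⁻¹).det := by
  rw [inv_sub_inv (iff_of_true hA.isUnit hB.isUnit), det_mul, det_mul]
  exact mul_pos (mul_pos hA.inv.det_pos hBA.det_pos) hB.inv.det_pos

end Matrix

namespace SpatialAdapt

theorem posDef_sub_of_loewnerLE_smul {ι : Type*} [Fintype ι] {A B : Matrix ι ι ℝ} {c : ℝ}
    (hc : 1 < c) (hA : A.PosDef) (hle : LoewnerLE (c • A) B) : (B - A).PosDef := by
  have hsplit : B - A = (B - c • A) + (c - 1) • A := by rw [sub_smul, one_smul]; abel
  rw [hsplit]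
  exact PosDef.posSemidef_add hle (hA.smul (sub_pos.mpr hc))

variable {n p : ℕ} {σv : Fin n → ℝ}

theorem Wmat_transpose (w : Fin n → ℝ) : (Wmat n σv w)ᵀ = Wmat n σv w :=
  diagonal_transpose _

theorem covMat_transpose : (covMat n σv)ᵀ = covMat n σv :=
  diagonal_transpose _

theorem Bmat_transpose (Ψ : Matrix (Fin p) (Fin n) ℝ) (w : Fin n → ℝ) :
    (Bmat n p σv Ψ w)ᵀ = Bmat n p σv Ψ w := by
  simp only [Bmat, transpose_mul, transpose_transpose, Wmat_transpose, Matrix.mul_assoc]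

theorem Wmat_mul_covMat_mul_Wmat (hσ : ∀ i, σv i ≠ 0) {w w' : Fin n → ℝ}
    (hww' : ∀ i, w i * w' i = w i) :
    Wmat n σv w * covMat n σv * Wmat n σv w' = Wmat n σv w := by
  simp only [Wmat, covMat, diagonal_mul_diagonal]
  congr 1
  funext i
  rw [div_mul_cancel₀ _ (pow_ne_zero 2 (hσ i)), ← mul_div_assoc, hww' i]

theorem Dmat_mul_covMat_mul_Dmat_transpose (Ψ : Matrix (Fin p) (Fin n) ℝ) {w w' : Fin n → ℝ}
    (hW : Wmat n σv w * covMat n σv * Wmat n σv w' = Wmat n σv w)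
    (hB : IsUnit (Bmat n p σv Ψ w).det) :
    Dmat n p σv Ψ w * covMat n σv * (Dmat n p σv Ψ w')ᵀ = (Bmat n p σv Ψ w')⁻¹ :=
  calc Dmat n p σv Ψ w * covMat n σv * (Dmat n p σv Ψ w')ᵀ
      = (Bmat n p σv Ψ w)⁻¹ * (Ψ * (Wmat n σv w * covMat n σv * Wmat n σv w') * Ψᵀ) *
          (Bmat n p σv Ψ w')⁻¹ := by
        simp only [Dmat, transpose_mul, transpose_nonsing_inv, Bmat_transpose, Wmat_transpose,
          Matrix.mul_assoc]
    _ = (Bmat n p σv Ψ w')⁻¹ := by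
        rw [hW, ← Bmat, nonsing_inv_mul _ hB, Matrix.one_mul]

theorem transpose_Dmat_mul_covMat_mul_Dmat_transpose (Ψ : Matrix (Fin p) (Fin n) ℝ)
    (w w' : Fin n → ℝ) :
    (Dmat n p σv Ψ w * covMat n σv * (Dmat n p σv Ψ w')ᵀ)ᵀ =
      Dmat n p σv Ψ w' * covMat n σv * (Dmat n p σv Ψ w)ᵀ := by
  simp only [transpose_mul, transpose_transpose, covMat_transpose, Matrix.mul_assoc]

theorem Dmat_mul_covMat_mul_Dmat_transpose_eq_inv_max (K : ℕ) (hσ : ∀ i, σv i ≠ 0)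
    (Ψ : Matrix (Fin p) (Fin n) ℝ) (w : ℕ → Fin n → ℝ)
    (hB : ∀ k, 1 ≤ k → k ≤ K → IsUnit (Bmat n p σv Ψ (w k)).det)
    (hrect : ∀ l m, 1 ≤ l → l ≤ m → m ≤ K → ∀ i, w l i * w m i = w l i)
    {l m : ℕ} (hl1 : 1 ≤ l) (hlK : l ≤ K) (hm1 : 1 ≤ m) (hmK : m ≤ K) :
    Dmat n p σv Ψ (w l) * covMat n σv * (Dmat n p σv Ψ (w m))ᵀ =
      (Bmat n p σv Ψ (w (max l m)))⁻¹ := by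
  have hle : ∀ l m, 1 ≤ l → l ≤ m → m ≤ K →
      Dmat n p σv Ψ (w l) * covMat n σv * (Dmat n p σv Ψ (w m))ᵀ =
        (Bmat n p σv Ψ (w m))⁻¹ :=
    fun l m hl1 hlm hmK => Dmat_mul_covMat_mul_Dmat_transpose Ψ
      (Wmat_mul_covMat_mul_Wmat hσ (hrect l m hl1 hlm hmK)) (hB l hl1 (hlm.trans hmK))
  rcases le_total l m with hlm | hml
  · rw [max_eq_right hlm, hle l m hl1 hlm hmK]
  · rw [max_eq_left hml, ← transpose_Dmat_mul_covMat_mul_Dmat_transpose, hle m l hm1 hml hlK,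
      transpose_nonsing_inv, Bmat_transpose]

theorem joint_covariance_nonsingular_rectangular_general
    (n p K : ℕ)
    (σv : Fin n → ℝ) (hσ : ∀ i, 0 < σv i)
    (Ψ : Matrix (Fin p) (Fin n) ℝ)
    (w : ℕ → Fin n → ℝ)
    (hB : ∀ k, 1 ≤ k → k ≤ K → (Bmat n p σv Ψ (w k)).PosDef)
    (u0 u : ℝ) (hu0 : 1 < u0)
    (hA5 : ∀ k, 2 ≤ k → k ≤ K →
      LoewnerLE (u0 • Bmat n p σv Ψ (w (k - 1))) (Bmat n p σv Ψ (w k)) ∧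
      LoewnerLE (Bmat n p σv Ψ (w k)) (u • Bmat n p σv Ψ (w (k - 1))))
    (hrect : ∀ l m, 1 ≤ l → l ≤ m → m ≤ K → ∀ i, w l i * w m i = w l i) :
    (∀ l m, 1 ≤ l → l ≤ K → 1 ≤ m → m ≤ K →
      Dmat n p σv Ψ (w l) * covMat n σv * (Dmat n p σv Ψ (w m))ᵀ =
        (Bmat n p σv Ψ (w (max l m)))⁻¹) ∧
    (∀ k, 2 ≤ k → k ≤ K →
      (jointCov n p σv σv Ψ w k =
        Matrix.of fun a b =>
          (Bmat n p σv Ψ (w (max (a.1 + 1) (b.1 + 1))))⁻¹ a.2 b.2) ∧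
      (jointCov n p σv σv Ψ w k).det =
        (Bmat n p σv Ψ (w k))⁻¹.det *
          ∏ l ∈ Finset.Icc 2 k,
            ((Bmat n p σv Ψ (w (l - 1)))⁻¹ - (Bmat n p σv Ψ (w l))⁻¹).det ∧
      0 < (jointCov n p σv σv Ψ w k).det ∧
      IsUnit (jointCov n p σv σv Ψ w k).det) := by
  have hblock : ∀ l m, 1 ≤ l → l ≤ K → 1 ≤ m → m ≤ K →
      Dmat n p σv Ψ (w l) * covMat n σv * (Dmat n p σv Ψ (w m))ᵀ =
        (Bmat n p σv Ψ (w (max l m)))⁻¹ :=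
    fun l m => Dmat_mul_covMat_mul_Dmat_transpose_eq_inv_max K (fun i => (hσ i).ne') Ψ w
      (fun k hk1 hkK => (hB k hk1 hkK).det_pos.ne'.isUnit) hrect
  refine ⟨hblock, fun k hk2 hkK => ?_⟩
  have hcov : jointCov n p σv σv Ψ w k =
      maxBlockMatrix (fun j => (Bmat n p σv Ψ (w j))⁻¹) k := by
    ext a b
    have := a.1.isLt
    have := b.1.isLt
    rw [jointCov, of_apply, hblock _ _ (by omega) (by omega) (by omega) (by omega), maxBlockMatrix,
      of_apply]
  have hdet :=
    hcov ▸ det_maxBlockMatrix (fun j => (Bmat n p σv Ψ (w j))⁻¹) (by omega : 1 ≤ k)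
  have hpos : 0 < (jointCov n p σv σv Ψ w k).det := by
    rw [hdet]
    refine mul_pos (hB k (by omega) hkK).inv.det_pos (Finset.prod_pos fun l hl => ?_)
    obtain ⟨hl2, hlk⟩ := Finset.mem_Icc.mp hl
    exact det_inv_sub_inv_pos (hB _ (by omega) (by omega)) (hB l (by omega) (by omega))
      (posDef_sub_of_loewnerLE_smul hu0 (hB _ (by omega) (by omega)) (hA5 l hl2 (by omega)).1)
  exact ⟨hcov, hdet, hpos, hpos.ne'.isUnit⟩

/-- **Nonsingularity of the joint covariance for rectangular kernels.** Under (A1), (A2),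
(A5) and the nested rectangular-kernel condition `w_{l,i} w_{m,i} = w_{l,i}` for `l ≤ m`,
the blocks of `𝚺_k` are `D_l Σ D_mᵀ = B_{max(l,m)}⁻¹`, its determinant factorizes as
`det 𝚺_k = det B_k⁻¹ ∏_{l=2}^k det (B_{l-1}⁻¹ - B_l⁻¹) > 0`, and `𝚺_k` is nonsingular. -/
theorem joint_covariance_nonsingular_rectangular
    (n p K : ℕ) (hpn : p < n) (hK : 1 ≤ K)
    (σv : Fin n → ℝ) (hσ : ∀ i, 0 < σv i)
    (Ψ : Matrix (Fin p) (Fin n) ℝ) (hA1 : Ψ.rank = p)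
    (w : ℕ → Fin n → ℝ)
    (hw : ∀ k, 1 ≤ k → k ≤ K → ∀ i, w k i ∈ Set.Icc (0 : ℝ) 1)
    (hA2 : p ≤ (Finset.univ.filter fun i => 0 < w 1 i).card)
    (hB : ∀ k, 1 ≤ k → k ≤ K → (Bmat n p σv Ψ (w k)).PosDef)
    (u0 u : ℝ) (hu0 : 1 < u0) (hu0u : u0 ≤ u)
    (hA5 : ∀ k, 2 ≤ k → k ≤ K →
      LoewnerLE (u0 • Bmat n p σv Ψ (w (k - 1))) (Bmat n p σv Ψ (w k)) ∧
      LoewnerLE (Bmat n p σv Ψ (w k)) (u • Bmat n p σv Ψ (w (k - 1))))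
    (hrect : ∀ l m, 1 ≤ l → l ≤ m → m ≤ K → ∀ i, w l i * w m i = w l i) :
    (∀ l m, 1 ≤ l → l ≤ K → 1 ≤ m → m ≤ K →
      Dmat n p σv Ψ (w l) * covMat n σv * (Dmat n p σv Ψ (w m))ᵀ =
        (Bmat n p σv Ψ (w (max l m)))⁻¹) ∧
    (∀ k, 2 ≤ k → k ≤ K →
      (jointCov n p σv σv Ψ w k =
        Matrix.of fun a b =>
          (Bmat n p σv Ψ (w (max (a.1 + 1) (b.1 + 1))))⁻¹ a.2 b.2) ∧
      (jointCov n p σv σv Ψ w k).det =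
        (Bmat n p σv Ψ (w k))⁻¹.det *
          ∏ l ∈ Finset.Icc 2 k,
            ((Bmat n p σv Ψ (w (l - 1)))⁻¹ - (Bmat n p σv Ψ (w l))⁻¹).det ∧
      0 < (jointCov n p σv σv Ψ w k).det ∧
      IsUnit (jointCov n p σv σv Ψ w k).det) :=
  joint_covariance_nonsingular_rectangular_general n p K σv hσ Ψ w hB u0 u hu0 hA5 hrect

end SpatialAdapt
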